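/- arXiv:2101.04628 — 2 statements merged into one kernel-verified Lean document; each statement's English description precedes it below -/
import Mathlib

section
/- For any integer g ≥ 2, the polynomial IE(M_B(C, SL_2); q) := (q^{2g-2}+1)(q^2-1)^{2g-2} + (1/2) q^{2g-3}(q^2+1)((q+1)^{2g-2} - (q-1)^{2g-2}) + 2^{2g-1} q^{2g-2}((q+1)^{2g-2} + (q-1)^{2g-2}) is palindromic of degree 6g-6; that is, q^{6g-6} · IE(1/q) = IE(q). -/
/-- The intersection E-polynomial of the SL₂ character variety, as a function of q. -/
def IESL2 (g : ℕ) (q : ℚ) : ℚ :=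
  (q ^ (2 * g - 2) + 1) * (q ^ 2 - 1) ^ (2 * g - 2) +
    (1 / 2) * q ^ (2 * g - 3) * (q ^ 2 + 1) *
      ((q + 1) ^ (2 * g - 2) - (q - 1) ^ (2 * g - 2)) +
    2 ^ (2 * g - 1) * q ^ (2 * g - 2) *
      ((q + 1) ^ (2 * g - 2) + (q - 1) ^ (2 * g - 2))

/-! Each summand of `IESL2 g` is a product of factors `c`, `q ^ k`, `q ^ k + 1` and even powers
of `q ^ k - 1`, all palindromic (the last because `q ^ k - 1` is antipalindromic), and the
degrees of the factors of every summand add up to `6g - 6`. -/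

section Palindromic

variable {K : Type*} [Field K]

def IsPalindromic (d : ℕ) (f : K → K) : Prop :=
  ∀ q ≠ 0, q ^ d * f q⁻¹ = f q

namespace IsPalindromic

variable {d e : ℕ} {f g : K → K}

theorem add (hf : IsPalindromic d f) (hg : IsPalindromic d g) :
    IsPalindromic d (fun q => f q + g q) := by
  intro q hq
  dsimp only
  rw [mul_add, hf q hq, hg q hq]

theorem sub (hf : IsPalindromic d f) (hg : IsPalindromic d g) :
    IsPalindromic d (fun q => f q - g q) := by
  intro q hq
  dsimp only
  rw [mul_sub, hf q hq, hg q hq]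

theorem mul (hf : IsPalindromic d f) (hg : IsPalindromic e g) :
    IsPalindromic (d + e) (fun q => f q * g q) := by
  intro q hq
  dsimp only
  rw [← hf q hq, ← hg q hq]
  ring

theorem pow (hf : IsPalindromic d f) (n : ℕ) : IsPalindromic (d * n) (fun q => f q ^ n) := by
  intro q hq
  dsimp only
  rw [pow_mul, ← mul_pow, hf q hq]

theorem of_degree_eq (hf : IsPalindromic d f) (h : d = e) : IsPalindromic e f :=
  h ▸ hf

end IsPalindromic

theorem isPalindromic_const (c : K) : IsPalindromic 0 (fun _ : K => c) := by
  intro q _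
  rw [pow_zero, one_mul]

theorem isPalindromic_pow (k : ℕ) : IsPalindromic (2 * k) (fun q : K => q ^ k) := by
  intro q hq
  dsimp only
  rw [inv_pow, two_mul, pow_add, mul_assoc, mul_inv_cancel₀ (pow_ne_zero k hq), mul_one]

theorem isPalindromic_pow_add_one (k : ℕ) : IsPalindromic k (fun q : K => q ^ k + 1) := by
  intro q hq
  dsimp only
  rw [inv_pow, mul_add, mul_inv_cancel₀ (pow_ne_zero k hq), mul_one, add_comm]

theorem isPalindromic_pow_sub_one_pow (k : ℕ) {n : ℕ} (hn : Even n) :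
    IsPalindromic (k * n) (fun q : K => (q ^ k - 1) ^ n) := by
  intro q hq
  dsimp only
  have hanti : q ^ k * (q⁻¹ ^ k - 1) = -(q ^ k - 1) := by
    rw [inv_pow, mul_sub, mul_inv_cancel₀ (pow_ne_zero k hq), mul_one, neg_sub]
  rw [pow_mul, ← mul_pow, hanti, hn.neg_pow]

theorem isPalindromic_add_one_pow (n : ℕ) : IsPalindromic n (fun q : K => (q + 1) ^ n) := by
  simpa using (isPalindromic_pow_add_one (K := K) 1).pow n

theorem isPalindromic_sub_one_pow {n : ℕ} (hn : Even n) :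
    IsPalindromic n (fun q : K => (q - 1) ^ n) := by
  simpa using isPalindromic_pow_sub_one_pow (K := K) 1 hn

end Palindromic

theorem isPalindromic_IESL2 {g : ℕ} (hg : 2 ≤ g) : IsPalindromic (6 * g - 6) (IESL2 g) := by
  obtain ⟨n, rfl⟩ : ∃ n, g = n + 2 := ⟨g - 2, by omega⟩
  have heven : Even (2 * n + 2) := ⟨n + 1, by ring⟩
  unfold IESL2
  rw [show 2 * (n + 2) - 2 = 2 * n + 2 by omega, show 2 * (n + 2) - 3 = 2 * n + 1 by omega,
    show 6 * (n + 2) - 6 = 6 * n + 6 by omega]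
  refine .add (.add ?_ ?_) ?_
  · exact ((isPalindromic_pow_add_one _).mul (isPalindromic_pow_sub_one_pow 2 heven)).of_degree_eq
      (by ring)
  · exact ((((isPalindromic_const _).mul (isPalindromic_pow _)).mul
      (isPalindromic_pow_add_one 2)).mul ((isPalindromic_add_one_pow _).sub
        (isPalindromic_sub_one_pow heven))).of_degree_eq (by ring)
  · exact (((isPalindromic_const _).mul (isPalindromic_pow _)).mul
      ((isPalindromic_add_one_pow _).add (isPalindromic_sub_one_pow heven))).of_degree_eq (by ring)

theorem stmt5 (g : ℕ) (hg : 2 ≤ g) (q : ℚ) (hq : q ≠ 0) :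
    q ^ (6 * g - 6) * IESL2 g (1 / q) = IESL2 g q := by
  rw [one_div]
  exact isPalindromic_IESL2 hg q hq
end

section
/- For any integer g ≥ 2: ∑_{i=-(2g-3)}^{2g-3} ⌊(2g-3-|i|)/2⌋ q^{2g-3+i} = q^2(1-q^{2g-4})(1-q^{2g-3}) / ((1-q)(1-q^2)); equivalently, (1-q)(1-q^2) · ∑_{i=-(2g-3)}^{2g-3} ⌊(2g-3-|i|)/2⌋ q^{2g-3+i} = q^2(1-q^{2g-4})(1-q^{2g-3}). -/
/-!
Let `S n = ∑_{|i| ≤ n} ⌊(n - |i|)/2⌋ q^(n+i)`. Passing from `n` to `n + 2` raises every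
coefficient of the tent by one and shifts it by `q ^ 2`, while the new outermost coefficients are
`⌊1/2⌋ = ⌊0/2⌋ = 0`; hence `S (n + 2) = q ^ 2 (S n + 1 + q + ⋯ + q ^ (2n))`. After multiplying by
`(1 - q)(1 - q ^ 2)` this is a recurrence solved by `q ^ 2 (1 - q ^ (n - 1))(1 - q ^ n)`, which
matches `S 1 = 0` and `S 2 = q ^ 2`; the theorem is the case `n = 2g - 3`.
-/

open Finset

variable {R : Type*} [CommRing R]

/-- The sum `S n` of the header; `Int.ediv` by `2` is the floor. -/
noncomputable def tentSum (n : ℕ) (q : R) : R :=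
  ∑ i ∈ Icc (-(n : ℤ)) n, (((n - |i|) / 2 : ℤ) : R) * q ^ (n + i).toNat

theorem one_sub_mul_sum_Icc_pow_toNat (n : ℕ) (q : R) :
    (1 - q) * ∑ i ∈ Icc (-(n : ℤ)) n, q ^ (n + i).toNat = 1 - q ^ (2 * n + 1) := by
  have reindex :
      ∑ i ∈ Icc (-(n : ℤ)) n, q ^ (n + i).toNat = ∑ j ∈ range (2 * n + 1), q ^ j := by
    rw [Int.Icc_eq_finset_map, sum_map, show (n + 1 - -(n : ℤ)).toNat = 2 * n + 1 by omega]
    refine sum_congr rfl fun j _ => ?_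
    simp only [Function.Embedding.trans_apply, Nat.castEmbedding_apply, addLeftEmbedding_apply]
    congr 1
    omega
  rw [reindex, ← mul_neg_geom_sum]

theorem tentSum_one (q : R) : tentSum 1 q = 0 :=
  sum_eq_zero fun i hi => by
    rw [mem_Icc] at hi
    rw [show ((1 : ℕ) - |i|) / 2 = 0 by push_cast [abs_eq_max_neg]; omega, Int.cast_zero,
      zero_mul]

theorem tentSum_two (q : R) : tentSum 2 q = q ^ 2 := by
  rw [tentSum, sum_eq_single (0 : ℤ)]
  · simp
  · intro i hi hi0
    rw [mem_Icc] at hi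
    rw [show ((2 : ℕ) - |i|) / 2 = 0 by push_cast [abs_eq_max_neg]; omega, Int.cast_zero,
      zero_mul]
  · simp

theorem tentSum_add_two (n : ℕ) (q : R) :
    tentSum (n + 2) q = q ^ 2 * (tentSum n q + ∑ i ∈ Icc (-(n : ℤ)) n, q ^ (n + i).toNat) := by
  have outer_zero : ∀ i ∈ Icc (-((n + 2 : ℕ) : ℤ)) (n + 2 : ℕ), i ∉ Icc (-(n : ℤ)) n →
      (((n + 2 : ℕ) - |i|) / 2 : ℤ) * q ^ ((n + 2 : ℕ) + i).toNat = 0 := by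
    intro i hi hi'
    rw [mem_Icc] at hi hi'
    rw [show ((n + 2 : ℕ) - |i|) / 2 = 0 by push_cast [abs_eq_max_neg]; omega, Int.cast_zero,
      zero_mul]
  rw [tentSum, ← sum_subset (Icc_subset_Icc (by omega) (by omega)) outer_zero, tentSum,
    ← sum_add_distrib, mul_sum]
  refine sum_congr rfl fun i hi => ?_
  rw [mem_Icc] at hi
  rw [show ((n + 2 : ℕ) - |i|) / 2 = (n - |i|) / 2 + 1 by push_cast [abs_eq_max_neg]; omega,
    show ((n + 2 : ℕ) + i).toNat = (n + i).toNat + 2 by omega]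
  push_cast
  ring

theorem one_sub_mul_one_sub_sq_mul_tentSum_succ (n : ℕ) (q : R) :
    (1 - q) * (1 - q ^ 2) * tentSum (n + 1) q = q ^ 2 * (1 - q ^ n) * (1 - q ^ (n + 1)) := by
  induction n using Nat.twoStepInduction with
  | zero => simp [tentSum_one]
  | one => rw [tentSum_two]; ring
  | more n ih _ =>
    rw [tentSum_add_two]
    linear_combination
      q ^ 2 * ih + q ^ 2 * (1 - q ^ 2) * one_sub_mul_sum_Icc_pow_toNat (n + 1) q

theorem stmt15 (g : ℕ) (hg : 2 ≤ g) (q : ℚ) :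
    (1 - q) * (1 - q ^ 2) *
        ∑ i ∈ Finset.Icc (-(2 * (g : ℤ) - 3)) (2 * (g : ℤ) - 3),
          ((⌊(2 * (g : ℚ) - 3 - |(i : ℚ)|) / 2⌋ : ℤ) : ℚ) * q ^ (2 * (g : ℤ) - 3 + i).toNat =
      q ^ 2 * (1 - q ^ (2 * g - 4)) * (1 - q ^ (2 * g - 3)) := by
  obtain ⟨n, rfl⟩ : ∃ n, g = n + 2 := ⟨g - 2, by omega⟩
  have hcenter : 2 * ((n + 2 : ℕ) : ℤ) - 3 = ((2 * n + 1 : ℕ) : ℤ) := by push_cast; ring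
  have hfloor (i : ℤ) :
      ⌊(2 * ((n + 2 : ℕ) : ℚ) - 3 - |(i : ℚ)|) / 2⌋ = ((2 * n + 1 : ℕ) - |i|) / 2 := by
    rw [show (2 * ((n + 2 : ℕ) : ℚ) - 3 - |(i : ℚ)|) / 2
        = (((2 * n + 1 : ℕ) - |i| : ℤ) : ℚ) / (2 : ℕ) by push_cast; ring,
      Rat.floor_intCast_div_natCast]
    rfl
  simp only [hcenter, hfloor]
  rw [show 2 * (n + 2) - 4 = 2 * n by omega, show 2 * (n + 2) - 3 = 2 * n + 1 by omega]
  exact one_sub_mul_one_sub_sq_mul_tentSum_succ (2 * n) q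
end
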